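/- The function ψ(λ) = −2 ∫_1^λ √((s−1)/s) ds, defined for λ ∈ ℂ \ (−∞,1], satisfies the closed-form identity ψ(λ) = −2√(λ(λ−1)) + ln(−1 + 2λ + 2√(λ(λ−1))). -/

import Mathlib

open Complex

/-- The branch of `√(λ(λ - 1))` with cut `[0, 1]` that behaves like `λ` as `λ → +∞`. -/
noncomputable def sqrtBranch1 (l : ℂ) : ℂ :=
  l * (1 - 1 / l) ^ ((1 : ℂ) / 2)

/-- The closed-form expression `ψ(λ) = -2√(λ(λ-1)) + ln(-1 + 2λ + 2√(λ(λ-1)))`. -/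
noncomputable def psiFun (l : ℂ) : ℂ :=
  -2 * sqrtBranch1 l + Complex.log (-1 + 2 * l + 2 * sqrtBranch1 l)

/-!
Write `S = sqrtBranch1 λ`. Then `S² = λ² - λ` and `(-1 + 2λ + 2S)(-1 + 2λ - 2S) = 1`.
The second identity keeps the argument of the logarithm off `(-∞, 0]` when `λ ∉ (-∞, 1]`:
were it a real `x ≤ 0`, then `4λ - 2 = x + x⁻¹ ≤ 0` would be real too, so `λ ≤ 1/2`.
Differentiating the first gives `S' = (2λ - 1) / (2S)`, hence
`ψ' = -2S' + (2 + 2S') / (-1 + 2λ + 2S) = -2(λ - 1) / S = -2√((λ - 1)/λ)`.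
On the real axis, `ψ(1) = 0` and `ψ` is continuous at `1`, so the fundamental theorem of
calculus on `[1, λ]` gives the integral formula.
-/

namespace Complex

lemma exists_ofReal_nonpos_of_notMem_slitPlane {z : ℂ} (hz : z ∉ slitPlane) :
    ∃ x : ℝ, x ≤ 0 ∧ (x : ℂ) = z := by
  rw [mem_slitPlane_iff, not_or, not_lt, not_not] at hz
  exact ⟨z.re, hz.1, ext rfl hz.2.symm⟩

lemma sub_one_mem_slitPlane_iff {l : ℂ} : l - 1 ∈ slitPlane ↔ l.im ≠ 0 ∨ 1 < l.re := by
  rw [mem_slitPlane_iff, or_comm]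
  simp

lemma cpow_one_div_two_sq (z : ℂ) : (z ^ ((1 : ℂ) / 2)) ^ 2 = z := by
  rw [one_div, cpow_ofNat_inv_pow]

lemma cpow_one_div_two_ofReal {x : ℝ} (hx : 0 ≤ x) :
    (x : ℂ) ^ ((1 : ℂ) / 2) = (√x : ℂ) := by
  rw [Real.sqrt_eq_rpow, ofReal_cpow hx]
  push_cast
  rfl

end Complex

section Branch

variable {l : ℂ}

lemma sqrtBranch1_sq (l : ℂ) : sqrtBranch1 l ^ 2 = l ^ 2 - l := by
  rcases eq_or_ne l 0 with rfl | hl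
  · simp [sqrtBranch1]
  · rw [sqrtBranch1, mul_pow, cpow_one_div_two_sq]
    field_simp

lemma ne_zero_of_sub_one_mem_slitPlane (hl : l - 1 ∈ slitPlane) : l ≠ 0 := by
  rintro rfl
  norm_num [mem_slitPlane_iff] at hl

lemma sqrtBranch1_ne_zero (hl : l - 1 ∈ slitPlane) : sqrtBranch1 l ≠ 0 := by
  have h : sqrtBranch1 l ^ 2 ≠ 0 := by
    rw [sqrtBranch1_sq, sq, ← mul_sub_one]
    exact mul_ne_zero (ne_zero_of_sub_one_mem_slitPlane hl) (slitPlane_ne_zero hl)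
  exact pow_ne_zero_iff two_ne_zero |>.mp h

lemma one_sub_one_div_mem_slitPlane (hl : l - 1 ∈ slitPlane) : 1 - 1 / l ∈ slitPlane := by
  by_contra h
  obtain ⟨x, hx, hxl⟩ := exists_ofReal_nonpos_of_notMem_slitPlane h
  have hl' : l = ((1 - x)⁻¹ : ℝ) := by
    push_cast
    rw [hxl]
    field_simp [ne_zero_of_sub_one_mem_slitPlane hl]
    ring
  rw [hl', ← ofReal_one, ← ofReal_sub, ofReal_mem_slitPlane, sub_pos] at hl
  exact hl.not_ge (inv_le_one_of_one_le₀ (by linarith))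

lemma hasDerivAt_sqrtBranch1 (hl : l - 1 ∈ slitPlane) :
    HasDerivAt sqrtBranch1 ((2 * l - 1) / (2 * sqrtBranch1 l)) l := by
  have hl0 := ne_zero_of_sub_one_mem_slitPlane hl
  have hd : DifferentiableAt ℂ sqrtBranch1 l :=
    differentiableAt_id.mul (((differentiableAt_const 1).sub
      ((differentiableAt_const 1).div differentiableAt_id hl0)).cpow_const
      (one_sub_one_div_mem_slitPlane hl))
  have hsq := hd.hasDerivAt.fun_pow 2
  simp only [sqrtBranch1_sq] at hsq
  have hpoly : HasDerivAt (fun z : ℂ => z ^ 2 - z) (2 * l - 1) l := by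
    simpa using (hasDerivAt_pow 2 l).fun_sub (hasDerivAt_id' l)
  have hderiv : (2 * l - 1) / (2 * sqrtBranch1 l) = deriv sqrtBranch1 l := by
    rw [div_eq_iff (mul_ne_zero two_ne_zero (sqrtBranch1_ne_zero hl)), hpoly.unique hsq]
    ring
  exact hderiv ▸ hd.hasDerivAt

lemma sqrtBranch1_conj_mul (l : ℂ) :
    (-1 + 2 * l + 2 * sqrtBranch1 l) * (-1 + 2 * l - 2 * sqrtBranch1 l) = 1 := by
  linear_combination (-4 : ℂ) * sqrtBranch1_sq l

lemma log_arg_mem_slitPlane (hl : l - 1 ∈ slitPlane) :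
    -1 + 2 * l + 2 * sqrtBranch1 l ∈ slitPlane := by
  by_contra h
  obtain ⟨x, hx, hxu⟩ := exists_ofReal_nonpos_of_notMem_slitPlane h
  have hinv := eq_inv_of_mul_eq_one_right (sqrtBranch1_conj_mul l)
  have hl' : l = ((x + x⁻¹ + 2) / 4 : ℝ) := by
    push_cast
    rw [hxu, ← hinv]
    ring
  rw [hl', ← ofReal_one, ← ofReal_sub, ofReal_mem_slitPlane] at hl
  have : x + x⁻¹ ≤ 0 := add_nonpos hx (inv_nonpos.mpr hx)
  linarith

lemma sub_one_div_sqrtBranch1 (hl : l - 1 ∈ slitPlane) :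
    (l - 1) / sqrtBranch1 l = (1 - 1 / l) ^ ((1 : ℂ) / 2) := by
  rw [div_eq_iff (sqrtBranch1_ne_zero hl), sqrtBranch1, ← mul_assoc, mul_comm _ l, mul_assoc,
    ← sq, cpow_one_div_two_sq]
  field_simp [ne_zero_of_sub_one_mem_slitPlane hl]

lemma hasDerivAt_psiFun (hl : l - 1 ∈ slitPlane) :
    HasDerivAt psiFun (-2 * (1 - 1 / l) ^ ((1 : ℂ) / 2)) l := by
  have hS := hasDerivAt_sqrtBranch1 hl
  have hu : HasDerivAt (fun z => -1 + 2 * z + 2 * sqrtBranch1 z)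
      (2 + 2 * ((2 * l - 1) / (2 * sqrtBranch1 l))) l := by
    simpa using ((hasDerivAt_id' l).const_mul 2).const_add (-1) |>.fun_add (hS.const_mul 2)
  have hψ := (hS.const_mul (-2)).fun_add (hu.clog (log_arg_mem_slitPlane hl))
  rw [← sub_one_div_sqrtBranch1 hl]
  refine hψ.congr_deriv ?_
  have hS0 := sqrtBranch1_ne_zero hl
  have hu0 := slitPlane_ne_zero (log_arg_mem_slitPlane hl)
  field_simp
  ring

end Branch

lemma cpow_one_div_two_one_sub_one_div_ofReal {x : ℝ} (hx : 1 ≤ x) :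
    (1 - 1 / (x : ℂ)) ^ ((1 : ℂ) / 2) = (√((x - 1) / x) : ℂ) := by
  have hx0 : x ≠ 0 := by positivity
  rw [← cpow_one_div_two_ofReal (div_nonneg (by linarith) (by linarith))]
  push_cast
  rw [sub_div, div_self (ofReal_ne_zero.mpr hx0)]

lemma sqrtBranch1_ofReal {x : ℝ} (hx : 1 ≤ x) :
    sqrtBranch1 x = (x * √((x - 1) / x) : ℝ) := by
  rw [sqrtBranch1, cpow_one_div_two_one_sub_one_div_ofReal hx, ofReal_mul]

lemma continuousAt_psiFun_ofReal {x : ℝ} (hx : 1 ≤ x) : ContinuousAt psiFun x := by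
  have hx0 : (x : ℂ) ≠ 0 := ofReal_ne_zero.mpr (by positivity)
  have hre : 0 ≤ (1 - 1 / (x : ℂ)).re := by
    rw [← ofReal_one, ← ofReal_div, ← ofReal_sub, ofReal_re, sub_nonneg]
    exact div_le_one_of_le₀ hx (zero_le_one.trans hx)
  have hpow : ContinuousAt (fun z : ℂ => z ^ ((1 : ℂ) / 2)) (1 - 1 / (x : ℂ)) :=
    continuousAt_cpow_const_of_re_pos (Or.inl hre) (by norm_num)
  have hS : ContinuousAt sqrtBranch1 x :=
    continuousAt_id.mul <|
      hpow.comp (f := fun z : ℂ => 1 - 1 / z) (by fun_prop (disch := exact hx0))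
  have harg : -1 + 2 * (x : ℂ) + 2 * sqrtBranch1 x ∈ slitPlane := by
    have : 0 < -1 + 2 * x + 2 * (x * √((x - 1) / x)) := by
      nlinarith [mul_nonneg (zero_le_one.trans hx) (Real.sqrt_nonneg ((x - 1) / x))]
    rw [sqrtBranch1_ofReal hx]
    exact_mod_cast ofReal_mem_slitPlane.mpr this
  exact (continuousAt_const.mul hS).add
    ((continuousAt_const.add (continuousAt_const.mul continuousAt_id)).add
      (continuousAt_const.mul hS) |>.clog harg)

lemma psiFun_one : psiFun 1 = 0 := by
  norm_num [psiFun, sqrtBranch1]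

lemma psiFun_ofReal_eq_integral {l : ℝ} (hl : 1 < l) :
    psiFun l = -2 * ((∫ s in (1 : ℝ)..l, √((s - 1) / s) : ℝ) : ℂ) := by
  have hcont : ContinuousOn (fun t : ℝ => psiFun t) (Set.Icc 1 l) := fun t ht =>
    ((continuousAt_psiFun_ofReal ht.1).comp continuous_ofReal.continuousAt).continuousWithinAt
  have hderiv : ∀ x ∈ Set.Ioo 1 l,
      HasDerivAt (fun t : ℝ => psiFun t) ((-2 * √((x - 1) / x) : ℝ) : ℂ) x := by
    intro x hx
    have hx1 : (x : ℂ) - 1 ∈ slitPlane := by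
      exact_mod_cast ofReal_mem_slitPlane.mpr (sub_pos.mpr hx.1)
    push_cast
    rw [← cpow_one_div_two_one_sub_one_div_ofReal hx.1.le]
    exact (hasDerivAt_psiFun hx1).comp_ofReal
  have hint : IntervalIntegrable (fun s : ℝ => ((-2 * √((s - 1) / s) : ℝ) : ℂ))
      MeasureTheory.volume 1 l := by
    refine ContinuousOn.intervalIntegrable ?_
    rw [Set.uIcc_of_le hl.le]
    have : ContinuousOn (fun s : ℝ => (s - 1) / s) (Set.Icc 1 l) :=
      (continuousOn_id.sub continuousOn_const).div continuousOn_id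
        fun s hs => (zero_lt_one.trans_le hs.1).ne'
    fun_prop
  have hftc := intervalIntegral.integral_eq_sub_of_hasDerivAt_of_le hl.le hcont hderiv hint
  rw [intervalIntegral.integral_ofReal, intervalIntegral.integral_const_mul, ofReal_one, psiFun_one,
    sub_zero] at hftc
  exact_mod_cast hftc.symm

/-- `ψ(λ) = -2 ∫_1^λ √((s-1)/s) ds` equals the closed form
`-2√(λ(λ-1)) + ln(-1 + 2λ + 2√(λ(λ-1)))`: the closed form agrees with the real integral
on `(1, ∞)` and is an antiderivative of `-2√((λ-1)/λ)` throughout `ℂ \ (-∞, 1]`. -/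
theorem psi_closed_form :
    (∀ l : ℝ, 1 < l →
      psiFun (l : ℂ) = -2 * ((∫ s in (1 : ℝ)..l, Real.sqrt ((s - 1) / s) : ℝ) : ℂ)) ∧
    (∀ l : ℂ, (l.im ≠ 0 ∨ 1 < l.re) →
      HasDerivAt psiFun (-2 * (1 - 1 / l) ^ ((1 : ℂ) / 2)) l) :=
  ⟨fun _ hl => psiFun_ofReal_eq_integral hl,
    fun _ hl => hasDerivAt_psiFun (sub_one_mem_slitPlane_iff.mpr hl)⟩
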